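/- Let x ∈ ℂ, let c₁, c₂ ∈ ℝ, and let η₁, η₂ be nonzero real parameters. Assume all hyperbolic sines appearing in the denominators below are nonzero. Then: (1) h⁻(x − iħc₂/4; η₁, c₁) = h⁻(x; η₁, c₁ + c₂); and (2) G(x − iħ(c₁ + c₂)/4; η₁, η₂)·h⁻(x − iħc₁/4; η₂, c₂) = h⁻(x; η₁, c₁ + c₂). -/

import Mathlib

/-- The structure function `h⁻(x; η, c)` of the `H⁻ E` exchange relation of
`A_{ħ,η}(ĝ)`, with `b = B_{ij}` and `hbar = ħ`. -/
noncomputable def hmFn (hbar b η c : ℝ) (x : ℂ) : ℂ :=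
  Complex.sinh ((Real.pi : ℂ) * (η : ℂ) * (x - Complex.I * (hbar : ℂ) * ((b : ℂ) + (c : ℂ) / 4))) /
    Complex.sinh ((Real.pi : ℂ) * (η : ℂ) * (x + Complex.I * (hbar : ℂ) * ((b : ℂ) - (c : ℂ) / 4)))

/-- The structure function `G(x; η, η̃)` of the `H^± H^±` exchange relation of
`A_{ħ,η}(ĝ)`, with `b = B_{ij}` and `hbar = ħ`. -/
noncomputable def Gfn (hbar b η η' : ℝ) (x : ℂ) : ℂ :=
  (Complex.sinh ((Real.pi : ℂ) * (η : ℂ) * (x - Complex.I * (hbar : ℂ) * (b : ℂ))) *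
      Complex.sinh ((Real.pi : ℂ) * (η' : ℂ) * (x + Complex.I * (hbar : ℂ) * (b : ℂ)))) /
    (Complex.sinh ((Real.pi : ℂ) * (η : ℂ) * (x + Complex.I * (hbar : ℂ) * (b : ℂ))) *
      Complex.sinh ((Real.pi : ℂ) * (η' : ℂ) * (x - Complex.I * (hbar : ℂ) * (b : ℂ))))

/-!
Both `h⁻` and `G` are built from the ratio `r_η(z) = sinhRatio ħ B η z = sinh(πη(z − iħB)) / sinh(πη(z + iħB))`:
`h⁻(x; η, c) = r_η(x − iħc/4)` and `G(z; η, η̃) = r_η(z) / r_η̃(z)`. So a shift of the argument by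
`−iħd/4` is a shift of the central charge by `d`, which gives (1), and in (2) the factor
`r_η₂(y)`, `y = x − iħ(c₁ + c₂)/4`, of `h⁻` cancels against the denominator of `G`.
-/

open Complex

noncomputable def sinhRatio (hbar b η : ℝ) (z : ℂ) : ℂ :=
  sinh (Real.pi * η * (z - I * hbar * b)) / sinh (Real.pi * η * (z + I * hbar * b))

theorem hmFn_eq_sinhRatio (hbar b η c : ℝ) (x : ℂ) :
    hmFn hbar b η c x = sinhRatio hbar b η (x - I * hbar * c / 4) := by
  unfold hmFn sinhRatio
  congr 3 <;> ring

theorem hmFn_sub_shift (hbar b η c d : ℝ) (x : ℂ) :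
    hmFn hbar b η c (x - I * hbar * d / 4) = hmFn hbar b η (c + d) x := by
  rw [hmFn_eq_sinhRatio, hmFn_eq_sinhRatio]
  congr 1
  push_cast
  ring

theorem Gfn_eq_sinhRatio_div (hbar b η η' : ℝ) (z : ℂ) :
    Gfn hbar b η η' z = sinhRatio hbar b η z / sinhRatio hbar b η' z := by
  unfold Gfn sinhRatio
  rw [div_div_div_eq, mul_comm (sinh _) (sinh (Real.pi * η' * (z - _)))]

theorem hmFn_coproduct_general (hbar b : ℝ) (x : ℂ) (c₁ c₂ : ℝ) (η₁ η₂ : ℝ)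
    (hd4 : Complex.sinh ((Real.pi : ℂ) * (η₂ : ℂ) *
      ((x - Complex.I * (hbar : ℂ) * ((c₁ : ℂ) + (c₂ : ℂ)) / 4) -
        Complex.I * (hbar : ℂ) * (b : ℂ))) ≠ 0)
    (hd5 : Complex.sinh ((Real.pi : ℂ) * (η₂ : ℂ) *
      ((x - Complex.I * (hbar : ℂ) * (c₁ : ℂ) / 4) +
        Complex.I * (hbar : ℂ) * ((b : ℂ) - (c₂ : ℂ) / 4))) ≠ 0) :
    hmFn hbar b η₁ c₁ (x - Complex.I * (hbar : ℂ) * (c₂ : ℂ) / 4) =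
        hmFn hbar b η₁ (c₁ + c₂) x ∧
      Gfn hbar b η₁ η₂ (x - Complex.I * (hbar : ℂ) * ((c₁ : ℂ) + (c₂ : ℂ)) / 4) *
          hmFn hbar b η₂ c₂ (x - Complex.I * (hbar : ℂ) * (c₁ : ℂ) / 4) =
        hmFn hbar b η₁ (c₁ + c₂) x := by
  refine ⟨hmFn_sub_shift hbar b η₁ c₁ c₂ x, ?_⟩
  set y := x - I * hbar * ((c₁ : ℂ) + c₂) / 4
  have hx₁ : x - I * hbar * c₁ / 4 - I * hbar * c₂ / 4 = y := by ring
  have hx : x - I * hbar * ((c₁ + c₂ : ℝ) : ℂ) / 4 = y := by push_cast; rfl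
  have hr : sinhRatio hbar b η₂ y ≠ 0 := by
    refine div_ne_zero hd4 ?_
    convert hd5 using 3
    ring
  rw [Gfn_eq_sinhRatio_div, hmFn_eq_sinhRatio, hx₁, div_mul_cancel₀ _ hr, hmFn_eq_sinhRatio, hx]

/-- the scalar identities verifying that `Δ⁺` preserves the `H⁻–E`
exchange relation: (1) `h⁻(x − iħc₂/4; η₁, c₁) = h⁻(x; η₁, c₁ + c₂)` (the term `E⊗1`), and
(2) `G(x − iħ(c₁ + c₂)/4; η₁, η₂)·h⁻(x − iħc₁/4; η₂, c₂) = h⁻(x; η₁, c₁ + c₂)`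
(the term `H⁻⊗E`). -/
theorem hmFn_coproduct (hbar b : ℝ) (x : ℂ) (c₁ c₂ : ℝ) (η₁ η₂ : ℝ)
    (h₁ : η₁ ≠ 0) (h₂ : η₂ ≠ 0)
    (hd1 : Complex.sinh ((Real.pi : ℂ) * (η₁ : ℂ) *
      ((x - Complex.I * (hbar : ℂ) * (c₂ : ℂ) / 4) +
        Complex.I * (hbar : ℂ) * ((b : ℂ) - (c₁ : ℂ) / 4))) ≠ 0)
    (hd2 : Complex.sinh ((Real.pi : ℂ) * (η₁ : ℂ) *
      (x + Complex.I * (hbar : ℂ) * ((b : ℂ) - ((c₁ : ℂ) + (c₂ : ℂ)) / 4))) ≠ 0)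
    (hd3 : Complex.sinh ((Real.pi : ℂ) * (η₁ : ℂ) *
      ((x - Complex.I * (hbar : ℂ) * ((c₁ : ℂ) + (c₂ : ℂ)) / 4) +
        Complex.I * (hbar : ℂ) * (b : ℂ))) ≠ 0)
    (hd4 : Complex.sinh ((Real.pi : ℂ) * (η₂ : ℂ) *
      ((x - Complex.I * (hbar : ℂ) * ((c₁ : ℂ) + (c₂ : ℂ)) / 4) -
        Complex.I * (hbar : ℂ) * (b : ℂ))) ≠ 0)
    (hd5 : Complex.sinh ((Real.pi : ℂ) * (η₂ : ℂ) *
      ((x - Complex.I * (hbar : ℂ) * (c₁ : ℂ) / 4) +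
        Complex.I * (hbar : ℂ) * ((b : ℂ) - (c₂ : ℂ) / 4))) ≠ 0) :
    hmFn hbar b η₁ c₁ (x - Complex.I * (hbar : ℂ) * (c₂ : ℂ) / 4) =
        hmFn hbar b η₁ (c₁ + c₂) x ∧
      Gfn hbar b η₁ η₂ (x - Complex.I * (hbar : ℂ) * ((c₁ : ℂ) + (c₂ : ℂ)) / 4) *
          hmFn hbar b η₂ c₂ (x - Complex.I * (hbar : ℂ) * (c₁ : ℂ) / 4) =
        hmFn hbar b η₁ (c₁ + c₂) x :=
  hmFn_coproduct_general hbar b x c₁ c₂ η₁ η₂ hd4 hd5
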